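/- arXiv:2605.21808 — 2 statements merged into one kernel-verified Lean document; each statement's English description precedes it below -/
import Mathlib

section
/- Let k¹ and k² be normalized CNP kernels on 𝔹_d and let k = k¹k² be their Schur (pointwise) product, a positive semidefinite kernel on 𝔹_d. For every w ∈ 𝔹_d, the four functions z ↦ k¹(z,w), z ↦ k²(z,w), z ↦ k¹(z,w)^{-1} and z ↦ k²(z,w)^{-1} all belong to H(k); moreover, for each w the function z ↦ k¹(z,w)^{-1} is a multiplier of H(k) (i.e., its pointwise product with any f ∈ H(k) lies in H(k)), and similarly for z ↦ k²(z,w)^{-1}. -/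
open scoped BigOperators ComplexConjugate

noncomputable section

/-- The open unit ball in `ℂ^d`. -/
def Ball (d : ℕ) : Set (EuclideanSpace ℂ (Fin d)) := Metric.ball 0 1

/-- The monomial `z ^ α` for a multi-index `α`. -/
def mono {d : ℕ} (z : EuclideanSpace ℂ (Fin d)) (α : Fin d → ℕ) : ℂ :=
  ∏ j, z j ^ α j

/-- Data of a normalized complete Nevanlinna–Pick kernel on the ball `𝔹_d`:
nonnegative coefficients `b α` for multi-indices `α ≠ 0` (we encode the absence
of the `α = 0` term by `b 0 = 0`), `b α = 1` when `|α| = 1`, and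
`Σ_{α ≠ 0} b α |z^α|² < 1` for every `z` in the ball. -/
structure CNPData (d : ℕ) where
  b : (Fin d → ℕ) → ℝ
  b_nonneg : ∀ α, 0 ≤ b α
  b_zero : b 0 = 0
  b_one : ∀ α, (∑ j, α j) = 1 → b α = 1
  summable_diag : ∀ z ∈ Ball d, Summable fun α : Fin d → ℕ => b α * ‖mono z α‖ ^ 2
  sum_lt_one : ∀ z ∈ Ball d, (∑' α : Fin d → ℕ, b α * ‖mono z α‖ ^ 2) < 1

/-- `S z w = Σ_{α ≠ 0} b_α z^α conj (w^α)`. -/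
def CNPData.S {d : ℕ} (K : CNPData d) (z w : EuclideanSpace ℂ (Fin d)) : ℂ :=
  ∑' α : Fin d → ℕ, (K.b α : ℂ) * mono z α * conj (mono w α)

/-- The normalized CNP kernel `k(z,w) = (1 - S z w)⁻¹`. -/
def CNPData.k {d : ℕ} (K : CNPData d) (z w : EuclideanSpace ℂ (Fin d)) : ℂ :=
  (1 - K.S z w)⁻¹

/-!
Let `x` be the feature map of `k¹` into `ℓ²`, so that `k¹(z,w) = (1 - ⟪x z, x w⟫)⁻¹`, and write
`k_u` for the kernel functions of `H(k)`. The kernel `k(z,w) (1 - ⟪x z, x w⟫) = k²(z,w)` is positive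
semidefinite (a CNP kernel is a sum of Schur powers of a Gram kernel), and so is
`‖y‖² ⟪x z, x w⟫ - ⟪x z, y⟫ ⟪y, x w⟫` by Cauchy–Schwarz; the Schur product theorem then gives
`‖∑ c_u ⟪y, x u⟫ k_u‖ ≤ ‖y‖ ‖∑ c_u k_u‖`. With `y = x w`, the map `k_u ↦ conj (k¹(u,w)⁻¹) k_u`
extends to a bounded operator on `H(k)`, whose adjoint is multiplication by `k¹(·,w)⁻¹`. Applying
this multiplier to `k_w = k¹(·,w) k²(·,w)` and to `k_0 = 1` gives the membership claims.
-/

open scoped ComplexOrder InnerProductSpace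

theorem norm_inner_lt_one {𝕜 E : Type*} [RCLike 𝕜] [SeminormedAddCommGroup E]
    [InnerProductSpace 𝕜 E] {x y : E} (hx : ‖x‖ < 1) (hy : ‖y‖ < 1) : ‖⟪x, y⟫_𝕜‖ < 1 :=
  (norm_inner_le_norm x y).trans_lt (mul_lt_one_of_nonneg_of_lt_one_left (norm_nonneg x) hx hy.le)

namespace Matrix

variable {n 𝕜 E : Type*} [RCLike 𝕜]

def quadForm (M : Matrix n n 𝕜) (c : n →₀ 𝕜) : 𝕜 :=
  c.sum fun i ci => c.sum fun j cj => star ci * M i j * cj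

lemma PosSemidef.quadForm_nonneg {M : Matrix n n 𝕜} (hM : M.PosSemidef) (c : n →₀ 𝕜) :
    0 ≤ M.quadForm c :=
  hM.2 c

lemma quadForm_sub (A B : Matrix n n 𝕜) (c : n →₀ 𝕜) :
    (A - B).quadForm c = A.quadForm c - B.quadForm c := by
  simp only [quadForm, Finsupp.sum, sub_apply, mul_sub, sub_mul, Finset.sum_sub_distrib]

lemma quadForm_smul (a : 𝕜) (A : Matrix n n 𝕜) (c : n →₀ 𝕜) :
    (a • A).quadForm c = a * A.quadForm c := by
  simp only [quadForm, Finsupp.sum, smul_apply, smul_eq_mul, Finset.mul_sum]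
  exact Finset.sum_congr rfl fun _ _ => Finset.sum_congr rfl fun _ _ => by ring

lemma quadForm_le_of_posSemidef_sub {A B : Matrix n n 𝕜} (h : (B - A).PosSemidef)
    (c : n →₀ 𝕜) : A.quadForm c ≤ B.quadForm c :=
  sub_nonneg.1 (quadForm_sub B A c ▸ h.quadForm_nonneg c)

section gram

variable [SeminormedAddCommGroup E] [InnerProductSpace 𝕜 E]

lemma quadForm_gram (v : n → E) (c : n →₀ 𝕜) :
    (gram 𝕜 v).quadForm c = (‖Finsupp.linearCombination 𝕜 v c‖ : 𝕜) ^ 2 := by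
  rw [← inner_self_eq_norm_sq_to_K, Finsupp.linearCombination_apply, quadForm, Finsupp.sum,
    Finsupp.sum, sum_inner]
  refine Finset.sum_congr rfl fun i _ => ?_
  simp only [inner_sum, inner_smul_left, inner_smul_right, gram_apply, RCLike.star_def]
  exact Finset.sum_congr rfl fun j _ => by ring

-- Mathlib's `Matrix.posSemidef_gram` assumes `Finite n`.
variable (𝕜) in
theorem posSemidef_gram' (v : n → E) : (gram 𝕜 v).PosSemidef :=
  ⟨isHermitian_gram 𝕜 v, fun c => by
    rw [← quadForm, quadForm_gram]
    exact_mod_cast sq_nonneg ‖Finsupp.linearCombination 𝕜 v c‖⟩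

end gram

theorem PosSemidef.of_hasSum {ι : Type*} {A : ι → Matrix n n 𝕜} {M : Matrix n n 𝕜}
    (hA : ∀ m, (A m).PosSemidef) (hsum : HasSum A M) : M.PosSemidef := by
  have hentry : ∀ i j, HasSum (fun m => A m i j) (M i j) := fun i j =>
    Pi.hasSum.1 (Pi.hasSum.1 hsum i) j
  refine ⟨?_, fun c => ?_⟩
  · ext i j
    refine (hentry j i).star.unique ?_
    simpa only [fun m => ((hA m).isHermitian.apply i j)] using hentry i j
  · have : HasSum (fun m => (A m).quadForm c) (M.quadForm c) := by
      refine hasSum_sum fun i _ => hasSum_sum fun j _ => ?_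
      exact ((hentry i j).mul_left _).mul_right _
    exact this.nonneg fun m => (hA m).quadForm_nonneg c

section inner

variable [SeminormedAddCommGroup E] [InnerProductSpace 𝕜 E]

theorem posSemidef_inner_pow (x : n → E) (m : ℕ) :
    (of fun i j => ⟪x i, x j⟫_𝕜 ^ m).PosSemidef := by
  induction m with
  | zero =>
    convert posSemidef_gram' 𝕜 fun _ : n => (1 : 𝕜) using 1
    ext i j
    simp
  | succ m ih =>
    convert ih.hadamard (posSemidef_gram' 𝕜 x) using 1
    ext i j
    simp [pow_succ]

theorem posSemidef_inv_one_sub_inner (x : n → E) (hx : ∀ i, ‖x i‖ < 1) :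
    (of fun i j => (1 - ⟪x i, x j⟫_𝕜)⁻¹).PosSemidef := by
  refine PosSemidef.of_hasSum (posSemidef_inner_pow x) <|
    Pi.hasSum.2 fun i => Pi.hasSum.2 fun j => ?_
  exact hasSum_geometric_of_norm_lt_one (norm_inner_lt_one (hx i) (hx j))

end inner

end Matrix

section Contraction

open Matrix

variable {X 𝕜 E H : Type*} [RCLike 𝕜] [NormedAddCommGroup E] [InnerProductSpace 𝕜 E]
  [SeminormedAddCommGroup H] [InnerProductSpace 𝕜 H]

theorem norm_linearCombination_inner_smul_le (kf : X → H) (x : X → E)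
    (hpsd : (of fun u v => ⟪kf u, kf v⟫_𝕜 * (1 - ⟪x u, x v⟫_𝕜)).PosSemidef)
    (y : E) (c : X →₀ 𝕜) :
    ‖Finsupp.linearCombination 𝕜 (fun u => ⟪y, x u⟫_𝕜 • kf u) c‖
      ≤ ‖y‖ * ‖Finsupp.linearCombination 𝕜 kf c‖ := by
  set G := gram 𝕜 kf
  have hgram : gram 𝕜 (fun u => ⟪y, x u⟫_𝕜 • kf u) = G ⊙ gram 𝕜 (innerSL 𝕜 y ∘ x) := by
    ext u v
    simp only [gram_apply, hadamard_apply, Function.comp_apply, innerSL_apply_apply,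
      inner_smul_left, inner_smul_right, RCLike.inner_apply, G]
    ring
  have hcs : (‖y‖ ^ 2 • (G ⊙ gram 𝕜 x) - G ⊙ gram 𝕜 (innerSL 𝕜 y ∘ x)).PosSemidef := by
    convert (posSemidef_gram' 𝕜 kf).hadamard
      (posSemidef_opNorm_smul_gram_sub_gram (𝕜 := 𝕜) x (innerSL 𝕜 y)) using 1
    ext u v
    simp only [innerSL_apply_norm, Matrix.sub_apply, Matrix.smul_apply, hadamard_apply,
      RCLike.real_smul_eq_coe_mul, G]
    ring
  have hscaled : (‖y‖ ^ 2 • G - ‖y‖ ^ 2 • (G ⊙ gram 𝕜 x)).PosSemidef := by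
    convert hpsd.smul (sq_nonneg ‖y‖) using 1
    ext u v
    simp only [Matrix.sub_apply, Matrix.smul_apply, hadamard_apply, of_apply, gram_apply,
      RCLike.real_smul_eq_coe_mul, G]
    ring
  have key : (‖Finsupp.linearCombination 𝕜 (fun u => ⟪y, x u⟫_𝕜 • kf u) c‖ : 𝕜) ^ 2
      ≤ ((‖y‖ * ‖Finsupp.linearCombination 𝕜 kf c‖ : ℝ) : 𝕜) ^ 2 := by
    calc _ = (G ⊙ gram 𝕜 (innerSL 𝕜 y ∘ x)).quadForm c := by rw [← hgram, quadForm_gram]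
      _ ≤ (‖y‖ ^ 2 • (G ⊙ gram 𝕜 x)).quadForm c := quadForm_le_of_posSemidef_sub hcs c
      _ ≤ (‖y‖ ^ 2 • G).quadForm c := quadForm_le_of_posSemidef_sub hscaled c
      _ = _ := by
        rw [RCLike.real_smul_eq_coe_smul (K := 𝕜), quadForm_smul, quadForm_gram]
        push_cast
        ring
  exact (pow_le_pow_iff_left₀ (norm_nonneg _) (by positivity) two_ne_zero).1
    (by exact_mod_cast key)

end Contraction

section Multiplier

variable {X 𝕜 H : Type*} [RCLike 𝕜] [NormedAddCommGroup H] [InnerProductSpace 𝕜 H]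
  [CompleteSpace H]

theorem denseRange_linearCombination_of_inner_eq_zero {kf : X → H}
    (h : ∀ f : H, (∀ z, ⟪kf z, f⟫_𝕜 = 0) → f = 0) :
    DenseRange (Finsupp.linearCombination 𝕜 kf) := by
  change Dense ((LinearMap.range (Finsupp.linearCombination 𝕜 kf) : Submodule 𝕜 H) : Set H)
  rw [Submodule.dense_iff_topologicalClosure_eq_top, Submodule.topologicalClosure_eq_top_iff,
    Submodule.eq_bot_iff]
  intro f hf
  exact h f fun z => (Submodule.mem_orthogonal _ f).1 hf _ ⟨Finsupp.single z 1, by simp⟩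

theorem exists_inner_eq_mul_inner_of_norm_le {kf : X → H}
    (hdense : DenseRange (Finsupp.linearCombination 𝕜 kf)) (φ : X → 𝕜) (C : ℝ)
    (hC : ∀ c, ‖Finsupp.linearCombination 𝕜 (fun u => conj (φ u) • kf u) c‖
      ≤ C * ‖Finsupp.linearCombination 𝕜 kf c‖) (f : H) :
    ∃ g : H, ∀ z, ⟪kf z, g⟫_𝕜 = φ z * ⟪kf z, f⟫_𝕜 := by
  set T : H →L[𝕜] H := (Finsupp.linearCombination 𝕜 fun u => conj (φ u) • kf u).extendOfNorm
    (Finsupp.linearCombination 𝕜 kf)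
  have hT : ∀ z, T (kf z) = conj (φ z) • kf z := fun z => by
    simpa using LinearMap.extendOfNorm_eq hdense ⟨C, hC⟩ (Finsupp.single z 1)
  refine ⟨ContinuousLinearMap.adjoint T f, fun z => ?_⟩
  rw [ContinuousLinearMap.adjoint_inner_right, hT, inner_smul_left, RCLike.conj_conj]

end Multiplier

namespace CNPData

variable {d : ℕ}

lemma mono_zero_left {α : Fin d → ℕ} (hα : α ≠ 0) : mono 0 α = 0 := by
  obtain ⟨j, hj⟩ := Function.ne_iff.1 hα
  exact Finset.prod_eq_zero (Finset.mem_univ j) (by simpa using hj)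

lemma S_zero_right (K : CNPData d) (z : EuclideanSpace ℂ (Fin d)) : K.S z 0 = 0 := by
  refine (tsum_congr fun α => ?_).trans tsum_zero
  by_cases hα : α = 0
  · simp [hα, K.b_zero]
  · simp [mono_zero_left hα]

lemma k_zero_right (K : CNPData d) (z : EuclideanSpace ℂ (Fin d)) : K.k z 0 = 1 := by
  simp [k, S_zero_right]

lemma S_self (K : CNPData d) (z : EuclideanSpace ℂ (Fin d)) :
    K.S z z = ((∑' α, K.b α * ‖mono z α‖ ^ 2 : ℝ) : ℂ) := by
  rw [S, Complex.ofReal_tsum]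
  refine tsum_congr fun α => ?_
  rw [mul_assoc, Complex.mul_conj, Complex.normSq_eq_norm_sq]
  push_cast
  ring

lemma norm_sqrt_b_mul_conj_mono_sq (K : CNPData d) (z : EuclideanSpace ℂ (Fin d))
    (α : Fin d → ℕ) :
    ‖(Real.sqrt (K.b α) : ℂ) * conj (mono z α)‖ ^ 2 = K.b α * ‖mono z α‖ ^ 2 := by
  rw [norm_mul, mul_pow, Complex.norm_real, Real.norm_eq_abs, sq_abs,
    Real.sq_sqrt (K.b_nonneg α), Complex.norm_conj]

def featureMap (K : CNPData d) (z : Ball d) : lp (fun _ : Fin d → ℕ => ℂ) 2 :=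
  ⟨fun α => Real.sqrt (K.b α) * conj (mono z α), memℓp_gen <| by
    simpa only [ENNReal.toReal_ofNat, Real.rpow_two, norm_sqrt_b_mul_conj_mono_sq] using
      K.summable_diag z z.2⟩

lemma inner_featureMap (K : CNPData d) (u v : Ball d) :
    ⟪K.featureMap u, K.featureMap v⟫_ℂ = K.S u v := by
  rw [lp.inner_eq_tsum, S]
  refine tsum_congr fun α => ?_
  simp only [featureMap, RCLike.inner_apply, map_mul, Complex.conj_ofReal, Complex.conj_conj]
  have hb : (Real.sqrt (K.b α) : ℂ) * Real.sqrt (K.b α) = K.b α := by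
    rw [← Complex.ofReal_mul, Real.mul_self_sqrt (K.b_nonneg α)]
  linear_combination (mono u α * conj (mono v α)) * hb

lemma norm_featureMap_lt_one (K : CNPData d) (z : Ball d) : ‖K.featureMap z‖ < 1 := by
  have h : ‖K.featureMap z‖ ^ 2 < 1 := by
    rw [← inner_self_eq_norm_sq (𝕜 := ℂ), inner_featureMap, S_self]
    simpa using K.sum_lt_one z z.2
  nlinarith [norm_nonneg (K.featureMap z)]

lemma norm_S_lt_one (K : CNPData d) (u v : Ball d) : ‖K.S u v‖ < 1 :=
  K.inner_featureMap u v ▸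
    norm_inner_lt_one (K.norm_featureMap_lt_one u) (K.norm_featureMap_lt_one v)

lemma one_sub_S_ne_zero (K : CNPData d) (u v : Ball d) : 1 - K.S u v ≠ 0 :=
  sub_ne_zero.2 fun h => by simpa [← h] using K.norm_S_lt_one u v

lemma k_ne_zero (K : CNPData d) (u v : Ball d) : K.k u v ≠ 0 :=
  inv_ne_zero (K.one_sub_S_ne_zero u v)

lemma k_mul_one_sub_S (K : CNPData d) (u v : Ball d) : K.k u v * (1 - K.S u v) = 1 :=
  inv_mul_cancel₀ (K.one_sub_S_ne_zero u v)

theorem posSemidef_k (K : CNPData d) : (Matrix.of fun u v : Ball d => K.k u v).PosSemidef := by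
  have h := Matrix.posSemidef_inv_one_sub_inner (𝕜 := ℂ) K.featureMap K.norm_featureMap_lt_one
  simp only [inner_featureMap] at h
  exact h

theorem exists_inner_eq_inv_k_mul_inner (K1 K2 : CNPData d) {H : Type*}
    [NormedAddCommGroup H] [InnerProductSpace ℂ H] [CompleteSpace H] {kf : Ball d → H}
    (hgram : ∀ u v, ⟪kf u, kf v⟫_ℂ = K1.k u v * K2.k u v)
    (hdense : DenseRange (Finsupp.linearCombination ℂ kf)) (w : Ball d) (f : H) :
    ∃ g : H, ∀ z, ⟪kf z, g⟫_ℂ = (K1.k z w)⁻¹ * ⟪kf z, f⟫_ℂ := by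
  set x := K1.featureMap
  have hpsd : (Matrix.of fun u v => ⟪kf u, kf v⟫_ℂ * (1 - ⟪x u, x v⟫_ℂ)).PosSemidef := by
    convert K2.posSemidef_k using 1
    ext u v
    rw [Matrix.of_apply, Matrix.of_apply, hgram, K1.inner_featureMap, mul_right_comm,
      K1.k_mul_one_sub_S, one_mul]
  refine exists_inner_eq_mul_inner_of_norm_le hdense _ 2 (fun c => ?_) f
  have hconj : ∀ u : Ball d, conj (K1.k u w)⁻¹ = 1 - ⟪x w, x u⟫_ℂ := fun u => by
    rw [k, inv_inv, map_sub, map_one, ← K1.inner_featureMap, inner_conj_symm]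
  have hsplit : Finsupp.linearCombination ℂ (fun u : Ball d => conj (K1.k u w)⁻¹ • kf u) c
      = Finsupp.linearCombination ℂ kf c
        - Finsupp.linearCombination ℂ (fun u => ⟪x w, x u⟫_ℂ • kf u) c := by
    simp only [hconj, sub_smul, one_smul, Finsupp.linearCombination_apply, Finsupp.sum, smul_sub,
      Finset.sum_sub_distrib]
  calc _ ≤ ‖Finsupp.linearCombination ℂ kf c‖
        + ‖Finsupp.linearCombination ℂ (fun u => ⟪x w, x u⟫_ℂ • kf u) c‖ :=
        hsplit ▸ norm_sub_le _ _
    _ ≤ ‖Finsupp.linearCombination ℂ kf c‖ + 1 * ‖Finsupp.linearCombination ℂ kf c‖ := by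
        gcongr
        exact (norm_linearCombination_inner_smul_le kf x hpsd (x w) c).trans
          (by gcongr; exact (K1.norm_featureMap_lt_one w).le)
    _ = 2 * ‖Finsupp.linearCombination ℂ kf c‖ := by ring

end CNPData

theorem stmt4_general (d : ℕ) (K1 K2 : CNPData d)
    {H : Type} [NormedAddCommGroup H] [InnerProductSpace ℂ H] [CompleteSpace H]
    (J : H →ₗ[ℂ] (Ball d → ℂ)) (hJ : Function.Injective J)
    (kf : Ball d → H)
    (hkf : ∀ w : Ball d, J (kf w) = fun z : Ball d => K1.k ↑z ↑w * K2.k ↑z ↑w)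
    (hrep : ∀ (f : H) (w : Ball d), J f w = inner ℂ (kf w) f)
    (w : Ball d) :
    (∃ g : H, J g = fun z : Ball d => K1.k ↑z ↑w) ∧
    (∃ g : H, J g = fun z : Ball d => K2.k ↑z ↑w) ∧
    (∃ g : H, J g = fun z : Ball d => (K1.k ↑z ↑w)⁻¹) ∧
    (∃ g : H, J g = fun z : Ball d => (K2.k ↑z ↑w)⁻¹) ∧
    (∀ f : H, ∃ g : H, J g = fun z : Ball d => (K1.k ↑z ↑w)⁻¹ * J f z) ∧
    (∀ f : H, ∃ g : H, J g = fun z : Ball d => (K2.k ↑z ↑w)⁻¹ * J f z) := by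
  have hgram : ∀ u v, ⟪kf u, kf v⟫_ℂ = K1.k u v * K2.k u v := fun u v => by
    rw [← hrep, hkf]
  have hdense : DenseRange (Finsupp.linearCombination ℂ kf) :=
    denseRange_linearCombination_of_inner_eq_zero fun f hf =>
      hJ <| by rw [map_zero]; exact funext fun z => (hrep f z).trans (hf z)
  have hmul : ∀ K K' : CNPData d, (∀ u v, ⟪kf u, kf v⟫_ℂ = K.k u v * K'.k u v) →
      ∀ f, ∃ g : H, J g = fun z : Ball d => (K.k z w)⁻¹ * J f z := fun K K' hKK' f => by
    obtain ⟨g, hg⟩ := K.exists_inner_eq_inv_k_mul_inner K' hKK' hdense w f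
    exact ⟨g, funext fun z => by rw [hrep, hg, hrep]⟩
  have hmul1 := hmul K1 K2 hgram
  have hmul2 := hmul K2 K1 fun u v => (hgram u v).trans (mul_comm _ _)
  have h0 : (0 : EuclideanSpace ℂ (Fin d)) ∈ Ball d := by simp [Ball]
  have hone : J (kf ⟨0, h0⟩) = fun _ => 1 := by
    simp [hkf, CNPData.k_zero_right]
  refine ⟨?_, ?_, ?_, ?_, hmul1, hmul2⟩
  · obtain ⟨g, hg⟩ := hmul2 (kf w)
    refine ⟨g, hg.trans (funext fun z => ?_)⟩
    rw [hrep, hgram, mul_comm (K1.k _ _), inv_mul_cancel_left₀ (K2.k_ne_zero z w)]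
  · obtain ⟨g, hg⟩ := hmul1 (kf w)
    refine ⟨g, hg.trans (funext fun z => ?_)⟩
    rw [hrep, hgram, inv_mul_cancel_left₀ (K1.k_ne_zero z w)]
  · obtain ⟨g, hg⟩ := hmul1 (kf ⟨0, h0⟩)
    exact ⟨g, by simp [hg, hone]⟩
  · obtain ⟨g, hg⟩ := hmul2 (kf ⟨0, h0⟩)
    exact ⟨g, by simp [hg, hone]⟩

/-- for the Schur product `k = k¹k²` of two normalized CNP kernels, the
functions `k¹(·,w)`, `k²(·,w)`, `k¹(·,w)⁻¹`, `k²(·,w)⁻¹` belong to `H(k)`, and the two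
inverses are moreover multipliers of `H(k)`. -/
theorem stmt4 (d : ℕ) (hd : 0 < d) (K1 K2 : CNPData d)
    {H : Type} [NormedAddCommGroup H] [InnerProductSpace ℂ H] [CompleteSpace H]
    (J : H →ₗ[ℂ] (Ball d → ℂ)) (hJ : Function.Injective J)
    (kf : Ball d → H)
    (hkf : ∀ w : Ball d, J (kf w) = fun z : Ball d => K1.k ↑z ↑w * K2.k ↑z ↑w)
    (hrep : ∀ (f : H) (w : Ball d), J f w = inner ℂ (kf w) f)
    (w : Ball d) :
    (∃ g : H, J g = fun z : Ball d => K1.k ↑z ↑w) ∧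
    (∃ g : H, J g = fun z : Ball d => K2.k ↑z ↑w) ∧
    (∃ g : H, J g = fun z : Ball d => (K1.k ↑z ↑w)⁻¹) ∧
    (∃ g : H, J g = fun z : Ball d => (K2.k ↑z ↑w)⁻¹) ∧
    (∀ f : H, ∃ g : H, J g = fun z : Ball d => (K1.k ↑z ↑w)⁻¹ * J f z) ∧
    (∀ f : H, ∃ g : H, J g = fun z : Ball d => (K2.k ↑z ↑w)⁻¹ * J f z) :=
  stmt4_general d K1 K2 J hJ kf hkf hrep w
end
end

section
/- Let d ≥ 1 and let b¹, b² : ℤ₊^d∖{0} → ℝ_{≥0} satisfy b¹_γ = b²_γ = 1 whenever |γ| = 1, and let μ : ℤ₊^d → ℂ satisfy μ(0) = 1. For δ ∈ ℤ₊^d define A(δ) = Σ_{r=1}^{|δ|} Σ_{(γ₁,…,γ_r)} ∏_{i=1}^r b¹_{γ_i} and A_μ(δ) = Σ_{r=1}^{|δ|} Σ_{(γ₁,…,γ_r)} (∏_{i=1}^r b¹_{γ_i})(∏_{i=1}^r μ(γ_i)) for δ ≠ 0, where the inner sums run over ordered r-tuples of nonzero multi-indices summing to δ, and set A(0) = A_μ(0)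 = 1; define B(δ) and B_μ(δ) analogously from b². Suppose that for every nonzero α ∈ ℤ₊^d, Σ_{δ₁+δ₂=α} A_μ(δ₁)B_μ(δ₂) = ( Σ_{δ₁+δ₂=α} A(δ₁)B(δ₂) ) · μ(α), where the sums run over all pairs (δ₁,δ₂) ∈ ℤ₊^d × ℤ₊^d with δ₁+δ₂ = α. Then μ(α) = ∏_{j=1}^d μ(e_j)^{α_j} for every α ∈ ℤ₊^d, where e_j is the j-th standard unit multi-index. -/
/-!
Write `ν(β) = ∏ⱼ μ(e_j)^{β_j}` and argue by strong induction on `|α|`, the cases `|α| ≤ 1` being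
immediate. If `μ = ν` below `α`, then `A_μ(δ) = A(δ) ν(δ)` for every `δ < α`, while `μ(α)` enters
`A_μ(α)` only through the one-part composition, as `b¹_α μ(α)`. The identity at `α` thus becomes
`(T - b¹_α - b²_α) (μ(α) - ν(α)) = 0` with `T = Σ A(δ₁) B(δ₂)`, and `T > b¹_α + b²_α`: all terms
are nonnegative and `A(α) ≥ b¹_α + 1`, since for `|α| ≥ 2` the composition of `α` into unit
vectors contributes `1`; likewise for `B`.
-/

open scoped BigOperators Classical

noncomputable section

/-- The (finite) set of ordered `r`-tuples `(γ₁, …, γ_r)` of *nonzero* multi-indices in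
`ℤ₊^d` with `γ₁ + ⋯ + γ_r = α`. -/
def comps (d r : ℕ) (α : Fin d → ℕ) : Finset (Fin r → (Fin d → ℕ)) :=
  (Fintype.piFinset fun _ : Fin r => Finset.Iic α).filter
    fun γ => (∑ i, γ i) = α ∧ ∀ i, γ i ≠ 0

/-- `A(δ) = Σ_{r=1}^{|δ|} Σ_{γ₁+⋯+γ_r=δ, γ_i ≠ 0} Π b_{γ_i}` for `δ ≠ 0`, and `A(0) = 1`. -/
def Afun (d : ℕ) (b : (Fin d → ℕ) → ℝ) (δ : Fin d → ℕ) : ℂ :=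
  if δ = 0 then 1 else
    ∑ r ∈ Finset.Icc 1 (∑ j, δ j), ∑ γ ∈ comps d r δ, ∏ i, (b (γ i) : ℂ)

/-- `A_μ(δ) = Σ_{r=1}^{|δ|} Σ_{γ₁+⋯+γ_r=δ, γ_i ≠ 0} (Π b_{γ_i})(Π μ(γ_i))` for `δ ≠ 0`,
and `A_μ(0) = 1`. -/
def Amu (d : ℕ) (b : (Fin d → ℕ) → ℝ) (μ : (Fin d → ℕ) → ℂ) (δ : Fin d → ℕ) : ℂ :=
  if δ = 0 then 1 else
    ∑ r ∈ Finset.Icc 1 (∑ j, δ j), ∑ γ ∈ comps d r δ,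
      (∏ i, (b (γ i) : ℂ)) * ∏ i, μ (γ i)

/-- The pairs `(δ₁, δ₂)` of multi-indices with `δ₁ + δ₂ = α`. -/
def splitPairs (d : ℕ) (α : Fin d → ℕ) : Finset ((Fin d → ℕ) × (Fin d → ℕ)) :=
  (Finset.Iic α ×ˢ Finset.Iic α).filter fun q => q.1 + q.2 = α

open Finset
open scoped ComplexOrder

section MultiPow

variable {ι M : Type*} [Fintype ι] [CommMonoid M]

def multiPow (c : ι → M) (β : ι → ℕ) : M := ∏ j, c j ^ β j

lemma multiPow_zero (c : ι → M) : multiPow c 0 = 1 := by simp [multiPow]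

lemma multiPow_add (c : ι → M) (β β' : ι → ℕ) :
    multiPow c (β + β') = multiPow c β * multiPow c β' := by
  simp [multiPow, pow_add, prod_mul_distrib]

lemma multiPow_sum {r : ℕ} (c : ι → M) (γ : Fin r → ι → ℕ) :
    multiPow c (∑ i, γ i) = ∏ i, multiPow c (γ i) := by
  simp only [multiPow, Finset.sum_apply, ← prod_pow_eq_pow_sum]
  exact prod_comm

lemma multiPow_single [DecidableEq ι] (c : ι → M) (j : ι) : multiPow c (Pi.single j 1) = c j := by
  rw [multiPow, prod_eq_single j (fun k _ hk => by simp [hk]) (by simp)]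
  simp

end MultiPow

lemma exists_sum_single_eq {d : ℕ} :
    ∀ (n : ℕ) (α : Fin d → ℕ), ∑ j, α j = n → ∃ js : Fin n → Fin d, ∑ i, Pi.single (js i) 1 = α
  | 0, α, hα => ⟨Fin.elim0, funext fun j => by simp_all [sum_eq_zero_iff]⟩
  | n + 1, α, hα => by
    obtain ⟨j, hj⟩ : ∃ j, α j ≠ 0 := by
      by_contra! h0
      simp [h0] at hα
    set α' := Function.update α j (α j - 1)
    have hsplit : Pi.single j 1 + α' = α := by
      ext k
      rcases eq_or_ne k j with rfl | hk
      · simp [α']; omega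
      · simp [α', hk]
    have hα' : ∑ k, α' k = n := by
      have := congrArg (fun β => ∑ k, β k) hsplit
      simp only [Pi.add_apply, sum_add_distrib, sum_pi_single', mem_univ, if_true] at this
      omega
    obtain ⟨js, hjs⟩ := exists_sum_single_eq n α' hα'
    exact ⟨Fin.cons j js, by simp [Fin.sum_univ_succ, hjs, hsplit]⟩

section Comps

variable {d r : ℕ} {α : Fin d → ℕ} {γ : Fin r → Fin d → ℕ}

lemma mem_comps : γ ∈ comps d r α ↔ ∑ i, γ i = α ∧ ∀ i, γ i ≠ 0 := by
  refine ⟨fun h => (mem_filter.1 h).2, fun h => mem_filter.2 ⟨?_, h⟩⟩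
  refine Fintype.mem_piFinset.2 fun i => mem_Iic.2 ?_
  rw [← h.1]
  exact single_le_sum (f := γ) (fun _ _ => zero_le) (mem_univ i)

lemma le_of_mem_comps (hγ : γ ∈ comps d r α) (i : Fin r) : γ i ≤ α :=
  mem_Iic.1 (Fintype.mem_piFinset.1 (mem_filter.1 hγ).1 i)

lemma comps_one (hα : α ≠ 0) : comps d 1 α = {fun _ => α} := by
  ext γ
  simp only [mem_comps, mem_singleton, Fin.sum_univ_one, Fin.forall_fin_one]
  constructor
  · rintro ⟨h, -⟩
    funext i
    rwa [Subsingleton.elim i 0]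
  · rintro rfl
    exact ⟨rfl, hα⟩

lemma ne_of_mem_comps (hr : 2 ≤ r) (hγ : γ ∈ comps d r α) (i : Fin r) : γ i ≠ α := by
  obtain ⟨hsum, hne⟩ := mem_comps.1 hγ
  have := Fin.nontrivial_iff_two_le.2 hr
  obtain ⟨k, hk⟩ := exists_ne i
  intro hi
  rw [← add_sum_erase _ _ (mem_univ i), hi, add_eq_left, sum_eq_zero_iff] at hsum
  exact hne k (hsum k (mem_erase.2 ⟨hk, mem_univ k⟩))

end Comps

section Amu

variable {d : ℕ} (b : (Fin d → ℕ) → ℝ)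

@[simp] lemma Afun_zero : Afun d b 0 = 1 := if_pos rfl

@[simp] lemma Amu_zero (μ : (Fin d → ℕ) → ℂ) : Amu d b μ 0 = 1 := if_pos rfl

lemma Amu_congr {μ μ' : (Fin d → ℕ) → ℂ} {δ : Fin d → ℕ}
    (h : ∀ γ ≤ δ, γ ≠ 0 → μ γ = μ' γ) : Amu d b μ δ = Amu d b μ' δ := by
  unfold Amu
  refine if_ctx_congr Iff.rfl (fun _ => rfl) fun _ => sum_congr rfl fun r _ => sum_congr rfl ?_
  intro γ hγ
  rw [prod_congr rfl fun i _ => h _ (le_of_mem_comps hγ i) ((mem_comps.1 hγ).2 i)]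

lemma Amu_multiPow (c : Fin d → ℂ) (δ : Fin d → ℕ) :
    Amu d b (multiPow c) δ = Afun d b δ * multiPow c δ := by
  unfold Amu Afun
  split_ifs with hδ
  · simp [hδ, multiPow_zero]
  · simp only [sum_mul]
    refine sum_congr rfl fun r _ => sum_congr rfl fun γ hγ => ?_
    rw [← multiPow_sum, (mem_comps.1 hγ).1]

lemma Amu_update_of_not_le {μ : (Fin d → ℕ) → ℂ} {α δ : Fin d → ℕ} (h : ¬ α ≤ δ) (z : ℂ) :
    Amu d b (Function.update μ α z) δ = Amu d b μ δ :=
  Amu_congr b fun γ hγ _ => Function.update_of_ne (by rintro rfl; exact h hγ) _ _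

lemma Amu_update_self (μ : (Fin d → ℕ) → ℂ) {α : Fin d → ℕ} (hα : α ≠ 0) (z : ℂ) :
    Amu d b (Function.update μ α z) α = Amu d b μ α + b α * (z - μ α) := by
  have h1 : 1 ∈ Icc 1 (∑ j, α j) := by
    have := (Fintype.sum_eq_zero_iff_of_nonneg fun _ => zero_le).not.2 hα
    simp only [mem_Icc]
    omega
  unfold Amu
  rw [if_neg hα, if_neg hα, sum_eq_add_sum_sdiff_singleton_of_mem h1,
    sum_eq_add_sum_sdiff_singleton_of_mem h1, comps_one hα, sum_singleton, sum_singleton]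
  have hrest : ∀ r ∈ Icc 1 (∑ j, α j) \ {1}, ∀ γ ∈ comps d r α,
      ∏ i, Function.update μ α z (γ i) = ∏ i, μ (γ i) := by
    intro r hr γ hγ
    have hr2 : 2 ≤ r := by
      simp only [mem_sdiff, mem_Icc, mem_singleton] at hr
      omega
    exact prod_congr rfl fun i _ => Function.update_of_ne (ne_of_mem_comps hr2 hγ i) _ _
  simp only [Fin.prod_univ_one, Function.update_self]
  rw [sum_congr rfl fun r hr => sum_congr rfl fun γ hγ => by rw [hrest r hr γ hγ]]
  ring

end Amu

section SplitPairs

variable {d : ℕ} {α : Fin d → ℕ}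

lemma mem_splitPairs {q : (Fin d → ℕ) × (Fin d → ℕ)} : q ∈ splitPairs d α ↔ q.1 + q.2 = α := by
  refine ⟨fun h => (mem_filter.1 h).2, fun h => mem_filter.2 ⟨?_, h⟩⟩
  rw [mem_product, mem_Iic, mem_Iic, ← h]
  exact ⟨le_self_add, le_add_self⟩

lemma eq_zero_of_add_eq_of_le {β β' : Fin d → ℕ} (h : β + β' = α) (hle : α ≤ β) : β' = 0 := by
  ext j
  have := congrFun h j
  have := hle j
  simp only [Pi.add_apply, Pi.zero_apply] at *
  omega

lemma sum_splitPairs_Amu_update (b1 b2 : (Fin d → ℕ) → ℝ) (μ : (Fin d → ℕ) → ℂ) (hα : α ≠ 0)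
    (z : ℂ) :
    ∑ q ∈ splitPairs d α, Amu d b1 μ q.1 * Amu d b2 μ q.2 =
      ∑ q ∈ splitPairs d α,
          Amu d b1 (Function.update μ α z) q.1 * Amu d b2 (Function.update μ α z) q.2 +
        (b1 α + b2 α) * (μ α - z) := by
  rw [← sub_eq_iff_eq_add', ← sum_sub_distrib, sum_eq_add (α, 0) (0, α)]
  · simp only [Amu_zero, Amu_update_self _ _ hα]
    ring
  · exact fun h => hα (congrArg Prod.fst h)
  · rintro ⟨β, β'⟩ hq hne
    have hsum := mem_splitPairs.1 hq
    have h1 : ¬ α ≤ β := fun hle => by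
      obtain rfl := eq_zero_of_add_eq_of_le hsum hle
      exact hne.1 (by rw [← hsum, add_zero])
    have h2 : ¬ α ≤ β' := fun hle => by
      obtain rfl := eq_zero_of_add_eq_of_le ((add_comm _ _).trans hsum) hle
      exact hne.2 (by rw [← hsum, zero_add])
    rw [Amu_update_of_not_le _ h1, Amu_update_of_not_le _ h2, sub_self]
  · exact fun h => absurd (mem_splitPairs.2 (add_zero α)) h
  · exact fun h => absurd (mem_splitPairs.2 (zero_add α)) h

end SplitPairs

section Positivity

variable {d : ℕ} {b : (Fin d → ℕ) → ℝ}

lemma Afun_nonneg (hb : ∀ γ, 0 ≤ b γ) (δ : Fin d → ℕ) : 0 ≤ Afun d b δ := by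
  unfold Afun
  split_ifs
  · exact zero_le_one
  · exact sum_nonneg fun r _ => sum_nonneg fun γ _ =>
      prod_nonneg fun i _ => Complex.zero_le_real.2 (hb _)

lemma add_one_le_Afun (hb : ∀ γ, 0 ≤ b γ) (hb_unit : ∀ γ, ∑ j, γ j = 1 → b γ = 1)
    {α : Fin d → ℕ} (hα : 2 ≤ ∑ j, α j) : (b α : ℂ) + 1 ≤ Afun d b α := by
  have hα0 : α ≠ 0 := by rintro rfl; simp at hα
  obtain ⟨js, hjs⟩ := exists_sum_single_eq (∑ j, α j) α rfl
  set f : ℕ → ℂ := fun r => ∑ γ ∈ comps d r α, ∏ i, (b (γ i) : ℂ)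
  have hf : ∀ r, 0 ≤ f r := fun r => sum_nonneg fun γ _ =>
    prod_nonneg fun i _ => Complex.zero_le_real.2 (hb _)
  have hf1 : f 1 = b α := by simp [f, comps_one hα0]
  have hunits : (fun i => Pi.single (js i) 1) ∈ comps d (∑ j, α j) α :=
    mem_comps.2 ⟨hjs, fun i => by simp⟩
  have hfn : 1 ≤ f (∑ j, α j) := by
    refine le_of_eq_of_le ?_ (single_le_sum (fun γ _ => prod_nonneg fun i _ =>
      Complex.zero_le_real.2 (hb _)) hunits)
    simp [hb_unit, sum_pi_single']
  rw [Afun, if_neg hα0, ← hf1]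
  exact (add_le_add le_rfl hfn).trans
    (add_le_sum (fun r _ => hf r) (by simp; omega) (by simp; omega) (by omega))

lemma lt_sum_splitPairs_Afun {b1 b2 : (Fin d → ℕ) → ℝ} (hb1 : ∀ γ, 0 ≤ b1 γ)
    (hb2 : ∀ γ, 0 ≤ b2 γ) (hb1_unit : ∀ γ, ∑ j, γ j = 1 → b1 γ = 1)
    (hb2_unit : ∀ γ, ∑ j, γ j = 1 → b2 γ = 1) {α : Fin d → ℕ} (hα : 2 ≤ ∑ j, α j) :
    (b1 α + b2 α : ℂ) < ∑ q ∈ splitPairs d α, Afun d b1 q.1 * Afun d b2 q.2 := by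
  have hα0 : α ≠ 0 := by rintro rfl; simp at hα
  calc (b1 α + b2 α : ℂ) < (b1 α + 1) + (b2 α + 1) := by
        exact_mod_cast (by linarith : b1 α + b2 α < b1 α + 1 + (b2 α + 1))
    _ ≤ Afun d b1 α * Afun d b2 0 + Afun d b1 0 * Afun d b2 α := by
        rw [Afun_zero, Afun_zero, mul_one, one_mul]
        exact add_le_add (add_one_le_Afun hb1 hb1_unit hα) (add_one_le_Afun hb2 hb2_unit hα)
    _ ≤ _ := by
      simpa only using add_le_sum (f := fun q => Afun d b1 q.1 * Afun d b2 q.2)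
        (i := (α, 0)) (j := (0, α))
        (fun q _ => mul_nonneg (Afun_nonneg hb1 _) (Afun_nonneg hb2 _))
        (mem_splitPairs.2 (add_zero α)) (mem_splitPairs.2 (zero_add α))
        fun h => hα0 (congrArg Prod.fst h)

end Positivity

lemma eq_multiPow_of_forall_sum_lt {d : ℕ} {b1 b2 : (Fin d → ℕ) → ℝ} (hb1 : ∀ γ, 0 ≤ b1 γ)
    (hb2 : ∀ γ, 0 ≤ b2 γ) (hb1_unit : ∀ γ, ∑ j, γ j = 1 → b1 γ = 1)
    (hb2_unit : ∀ γ, ∑ j, γ j = 1 → b2 γ = 1) {μ : (Fin d → ℕ) → ℂ} (c : Fin d → ℂ)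
    {α : Fin d → ℕ} (hα : 2 ≤ ∑ j, α j)
    (h : ∑ q ∈ splitPairs d α, Amu d b1 μ q.1 * Amu d b2 μ q.2
        = (∑ q ∈ splitPairs d α, Afun d b1 q.1 * Afun d b2 q.2) * μ α)
    (ih : ∀ β : Fin d → ℕ, ∑ j, β j < ∑ j, α j → μ β = multiPow c β) :
    μ α = multiPow c α := by
  have hα0 : α ≠ 0 := by rintro rfl; simp at hα
  set μ' := Function.update μ α (multiPow c α)
  have hμ' : ∀ b : (Fin d → ℕ) → ℝ, ∀ δ ≤ α, Amu d b μ' δ = Afun d b δ * multiPow c δ := by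
    intro b δ hδ
    rw [← Amu_multiPow]
    refine Amu_congr b fun γ hγ _ => ?_
    rcases eq_or_ne γ α with rfl | hne
    · exact Function.update_self _ _ _
    · exact (Function.update_of_ne hne _ _).trans <|
        ih γ (Fintype.sum_strictMono (lt_of_le_of_ne (hγ.trans hδ) hne))
  have hsum : ∑ q ∈ splitPairs d α, Amu d b1 μ' q.1 * Amu d b2 μ' q.2
      = (∑ q ∈ splitPairs d α, Afun d b1 q.1 * Afun d b2 q.2) * multiPow c α := by
    rw [sum_mul]
    refine sum_congr rfl fun q hq => ?_
    have hq := mem_splitPairs.1 hq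
    rw [hμ' b1 q.1 (hq ▸ le_self_add), hμ' b2 q.2 (hq ▸ le_add_self), ← hq, multiPow_add]
    ring
  have key := sum_splitPairs_Amu_update b1 b2 μ hα0 (multiPow c α)
  rw [h, hsum] at key
  have hT := (lt_sum_splitPairs_Afun hb1 hb2 hb1_unit hb2_unit hα).ne'
  have hprod : ((∑ q ∈ splitPairs d α, Afun d b1 q.1 * Afun d b2 q.2) - (b1 α + b2 α)) *
      (μ α - multiPow c α) = 0 := by
    linear_combination key
  exact sub_eq_zero.1 ((mul_eq_zero.1 hprod).resolve_left (sub_ne_zero.2 hT))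

theorem stmt6_general (d : ℕ)
    (b1 b2 : (Fin d → ℕ) → ℝ)
    (hb1nn : ∀ γ, 0 ≤ b1 γ) (hb2nn : ∀ γ, 0 ≤ b2 γ)
    (hb1one : ∀ γ, (∑ j, γ j) = 1 → b1 γ = 1) (hb2one : ∀ γ, (∑ j, γ j) = 1 → b2 γ = 1)
    (μ : (Fin d → ℕ) → ℂ) (hμ0 : μ 0 = 1)
    (h : ∀ α : Fin d → ℕ, α ≠ 0 →
      (∑ q ∈ splitPairs d α, Amu d b1 μ q.1 * Amu d b2 μ q.2)
        = (∑ q ∈ splitPairs d α, Afun d b1 q.1 * Afun d b2 q.2) * μ α) :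
    ∀ α : Fin d → ℕ, μ α = ∏ j, μ (Pi.single j 1) ^ α j := by
  suffices ∀ n α, ∑ j, α j = n → μ α = multiPow (fun j => μ (Pi.single j 1)) α from
    fun α => this _ α rfl
  intro n
  induction n using Nat.strong_induction_on with
  | _ n ih =>
  intro α hn
  rcases lt_or_ge n 2 with hn2 | hn2
  · obtain ⟨js, rfl⟩ := exists_sum_single_eq n α hn
    interval_cases n
    · simp [hμ0, multiPow_zero]
    · simp [multiPow_single]
  · subst hn
    have hα0 : α ≠ 0 := by rintro rfl; simp at hn2
    exact eq_multiPow_of_forall_sum_lt hb1nn hb2nn hb1one hb2one _ hn2 (h α hα0)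
      fun β hβ => ih _ hβ β rfl

/-- the key combinatorial claim for Schur products of two CNP kernels.
If `μ(0) = 1` and `Σ_{δ₁+δ₂=α} A_μ(δ₁) B_μ(δ₂) = (Σ_{δ₁+δ₂=α} A(δ₁) B(δ₂)) · μ(α)` for all
nonzero `α`, where `A, A_μ` come from `b¹` and `B, B_μ` from `b²` (both `≥ 0` and `= 1` on
multi-indices of length one), then `μ(α) = Π_j μ(e_j)^{α_j}` for all `α`. -/
theorem stmt6 (d : ℕ) (hd : 0 < d)
    (b1 b2 : (Fin d → ℕ) → ℝ)
    (hb1nn : ∀ γ, 0 ≤ b1 γ) (hb2nn : ∀ γ, 0 ≤ b2 γ)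
    (hb1one : ∀ γ, (∑ j, γ j) = 1 → b1 γ = 1) (hb2one : ∀ γ, (∑ j, γ j) = 1 → b2 γ = 1)
    (μ : (Fin d → ℕ) → ℂ) (hμ0 : μ 0 = 1)
    (h : ∀ α : Fin d → ℕ, α ≠ 0 →
      (∑ q ∈ splitPairs d α, Amu d b1 μ q.1 * Amu d b2 μ q.2)
        = (∑ q ∈ splitPairs d α, Afun d b1 q.1 * Afun d b2 q.2) * μ α) :
    ∀ α : Fin d → ℕ, μ α = ∏ j, μ (Pi.single j 1) ^ α j :=
  stmt6_general d b1 b2 hb1nn hb2nn hb1one hb2one μ hμ0 h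
end
end
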